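/- Suppose χ : ℝ × (ℝⁿ)^{k} × ℝⁿ → ℝⁿ is a smooth map satisfying (∂L/∂q_k)(t, q_0, …, q_{k−1}, χ(t, q_0, …, q_{k−1}, π)) = π for all arguments (a smooth inverse of the highest Legendre relation), and define the Hamiltonian function H(t, q_0, …, q_{k−1}, p^0, …, p^{k−1}) = Σ_{i=0}^{k−2} ⟨p^i, q_{i+1}⟩ + ⟨p^{k−1}, χ⟩ − L(t, q_0, …, q_{k−1}, χ), where χ is evaluated at (t, q_0, …, q_{k−1}, p^{k−1}). Let q_0, …, q_{k−1}, p^0, …, p^{k−1} : ℝ → ℝⁿ be smooth curves and set q_k(t) = χ(t, q_0(t), …, q_{k−1}(t), p^{k−1}(t)). Then the following two systems of equations are equivalent for all t: (A) q_i′ = q_{i+1} for 0 ≤ i ≤ k−1, (p^0)′ = ∂L/∂q_0, and (p^i)′ = ∂L/∂q_i − p^{i−1} for 1 ≤ i ≤ k−1 (partial gradients of L evaluated at (t, q_0(t), …, q_k(t))); (B) the Hamilton equations q_i′ = ∂H/∂p^i and (p^i)′ = −∂H/∂q_i for 0 ≤ i ≤ k−1 (partial gradients of H evaluated along the curve). 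-/

import Mathlib

/-!
Write `H = ∑ᵢ ⟨pⁱ, q_{i+1}⟩ + Λ(t, q, p^{k-1}, χ)` with `Λ(t, q, π, w) = ⟨π, w⟩ - L(t, q, w)`.
The Legendre relation says precisely that `w = χ(t, q, π)` is a critical point of `Λ` in `w`, so
by the envelope theorem the dependence of `χ` on `(q, π)` drops out of the gradients of `H`:
`∂H/∂pⁱ = q_{i+1}` (with `q_k = χ`) and `∂H/∂q_i = p^{i-1} - ∂L/∂q_i` (with `p^{-1} = 0`).
Substituting these, each Hamilton equation becomes the corresponding equation of system (A).
-/

open scoped ContDiff RealInnerProductSpace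

noncomputable section

/-- `ℝⁿ` as a Euclidean space. -/
abbrev Evec (n : ℕ) := EuclideanSpace ℝ (Fin n)

/-- The partial gradient `∂L/∂q_i` of a `k`-th order Lagrangian
`L : ℝ × (ℝⁿ)^(k+1) → ℝ` with respect to the variable `q_i`. -/
noncomputable def pgrad {n k : ℕ} (L : ℝ × (Fin (k+1) → Evec n) → ℝ)
    (i : Fin (k+1)) (x : ℝ × (Fin (k+1) → Evec n)) : Evec n :=
  gradient (fun v => L (x.1, Function.update x.2 i v)) (x.2 i)

section GradientCalculus

open InnerProductSpace

variable {E W : Type*} [NormedAddCommGroup E] [InnerProductSpace ℝ E] [CompleteSpace E]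
  [NormedAddCommGroup W] [InnerProductSpace ℝ W] [CompleteSpace W]

theorem HasGradientAt.add {f₁ f₂ : E → ℝ} {g₁ g₂ x : E} (h₁ : HasGradientAt f₁ g₁ x)
    (h₂ : HasGradientAt f₂ g₂ x) : HasGradientAt (fun y => f₁ y + f₂ y) (g₁ + g₂) x := by
  rw [hasGradientAt_iff_hasFDerivAt, map_add]
  exact h₁.hasFDerivAt.add h₂.hasFDerivAt

theorem HasGradientAt.sub {f₁ f₂ : E → ℝ} {g₁ g₂ x : E} (h₁ : HasGradientAt f₁ g₁ x)
    (h₂ : HasGradientAt f₂ g₂ x) : HasGradientAt (fun y => f₁ y - f₂ y) (g₁ - g₂) x := by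
  rw [hasGradientAt_iff_hasFDerivAt, map_sub]
  exact h₁.hasFDerivAt.sub h₂.hasFDerivAt

theorem hasGradientAt_inner_right (c x : E) : HasGradientAt (fun v => ⟪c, v⟫) c x :=
  hasGradientAt_iff_hasFDerivAt.2 (toDual ℝ E c).hasFDerivAt

theorem hasGradientAt_envelope {F : E × W → ℝ} {φ : E → W} {x g : E} {w : W}
    (hx : φ x = w) (hF : DifferentiableAt ℝ F (x, w))
    (hFx : HasGradientAt (fun y => F (y, w)) g x) (hFw : HasGradientAt (fun v => F (x, v)) 0 w) (hφ : DifferentiableAt ℝ φ x) :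
    HasGradientAt (fun y => F (y, φ y)) g x := by
  subst hx
  set D := fderiv ℝ F (x, φ x)
  have hDx : D.comp (.inl ℝ E W) = toDual ℝ E g :=
    (hF.hasFDerivAt.comp x (hasFDerivAt_prodMk_left x (φ x))).unique hFx.hasFDerivAt
  have hDw : D.comp (.inr ℝ E W) = 0 := by
    simpa using (hF.hasFDerivAt.comp (φ x) (hasFDerivAt_prodMk_right x (φ x))).unique
      hFw.hasFDerivAt
  have hchain := hF.hasFDerivAt.comp x ((hasFDerivAt_id x).prodMk hφ.hasFDerivAt)
  refine hchain.congr_fderiv ?_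
  ext u
  rw [ContinuousLinearMap.comp_apply, ← D.comp_inl_add_comp_inr]
  simp [hDx, hDw]

end GradientCalculus

section Tuples

variable {E : Type*} [NormedAddCommGroup E] [InnerProductSpace ℝ E] {k : ℕ}

theorem Fin.snoc_val_eq {α : Type*} (f : ℕ → α) (k : ℕ) :
    (Fin.snoc (fun j : Fin k => f j) (f k) : Fin (k + 1) → α) =
      fun j : Fin (k + 1) => f j := by
  funext j
  refine Fin.lastCases ?_ (fun j => ?_) j <;> simp

theorem DifferentiableAt.finSnoc {X : Type*} [NormedAddCommGroup X] [NormedSpace ℝ X]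
    {f : X → Fin k → E} {g : X → E} {x : X} (hf : DifferentiableAt ℝ f x)
    (hg : DifferentiableAt ℝ g x) :
    DifferentiableAt ℝ (fun y => (Fin.snoc (f y) (g y) : Fin (k + 1) → E)) x := by
  refine differentiableAt_pi.2 fun i => Fin.lastCases ?_ (fun j => ?_) i
  · simpa using hg
  · simpa using differentiableAt_pi.1 hf j

theorem hasGradientAt_sum_inner_update [CompleteSpace E] {ι : Type*} [Fintype ι]
    [DecidableEq ι] (c x : ι → E) (I : ι) (y : E) :
    HasGradientAt (fun v => ∑ i, ⟪c i, Function.update x I v i⟫) (c I) y := by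
  have h : (fun v => ∑ i, ⟪c i, Function.update x I v i⟫) =
      fun v => ⟪c I, v⟫ + ∑ i ∈ Finset.univ \ {I}, ⟪c i, x i⟫ := by
    funext v
    simp_rw [Function.apply_update (fun i => inner ℝ (c i)), Finset.sum_update_of_mem
      (Finset.mem_univ I)]
  rw [h]
  simpa using (hasGradientAt_inner_right (c I) y).add (hasGradientAt_const y _)

def nextOrZero (x : Fin k → E) (i : Fin k) : E :=
  if h : (i : ℕ) + 1 < k then x ⟨i + 1, h⟩ else 0

def prevOrZero (x : Fin k → E) (i : Fin k) : E :=
  if h : 1 ≤ (i : ℕ) then x ⟨i - 1, by omega⟩ else 0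

theorem sum_inner_nextOrZero (x y : Fin k → E) :
    ∑ i, ⟪x i, nextOrZero y i⟫ = ∑ i, ⟪prevOrZero x i, y i⟫ := by
  cases k with
  | zero => simp
  | succ m =>
    rw [Fin.sum_univ_castSucc, Fin.sum_univ_succ]
    simp [nextOrZero, prevOrZero, Fin.succ, Fin.castSucc, Fin.castAdd, Fin.castLE]

end Tuples

section Legendre

variable {n k : ℕ} {L : ℝ × (Fin (k + 1) → Evec n) → ℝ}

theorem hasGradientAt_pgrad (hL : Differentiable ℝ L) (z : ℝ × (Fin (k + 1) → Evec n))
    (i : Fin (k + 1)) :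
    HasGradientAt (fun v => L (z.1, Function.update z.2 i v)) (pgrad L i z) (z.2 i) :=
  (hL.comp ((differentiable_const z.1).prodMk
    fun v => (hasFDerivAt_update z.2 v).differentiableAt) _).hasGradientAt

theorem hasGradientAt_pgrad_last (hL : Differentiable ℝ L) (t : ℝ) (qs : Fin k → Evec n)
    (w : Evec n) :
    HasGradientAt (fun v => L (t, Fin.snoc qs v)) (pgrad L (Fin.last k) (t, Fin.snoc qs w))
      w := by
  simpa [Fin.update_snoc_last] using hasGradientAt_pgrad hL (t, Fin.snoc qs w) (Fin.last k)

def legendreFun (L : ℝ × (Fin (k + 1) → Evec n) → ℝ) (t : ℝ) (qs : Fin k → Evec n)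
    (π w : Evec n) : ℝ :=
  ⟪π, w⟫ - L (t, Fin.snoc qs w)

theorem DifferentiableAt.legendreFun {X : Type*} [NormedAddCommGroup X] [NormedSpace ℝ X]
    (hL : Differentiable ℝ L) (t : ℝ) {qs : X → Fin k → Evec n} {π w : X → Evec n} {x : X}
    (hqs : DifferentiableAt ℝ qs x) (hπ : DifferentiableAt ℝ π x)
    (hw : DifferentiableAt ℝ w x) :
    DifferentiableAt ℝ (fun y => legendreFun L t (qs y) (π y) (w y)) x :=
  (hπ.inner ℝ hw).sub (hL.differentiableAt.comp x ((differentiableAt_const t).prodMk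
    (hqs.finSnoc hw)))

theorem hasGradientAt_legendreFun_of_pgrad_eq (hL : Differentiable ℝ L) {t : ℝ}
    {qs : Fin k → Evec n} {π w : Evec n} (hw : pgrad L (Fin.last k) (t, Fin.snoc qs w) = π) :
    HasGradientAt (legendreFun L t qs π) 0 w := by
  have h := (hasGradientAt_inner_right π w).sub (hasGradientAt_pgrad_last hL t qs w)
  rwa [hw, sub_self] at h

variable {χ : ℝ × (Fin k → Evec n) × Evec n → Evec n}

theorem hasGradientAt_legendreFun_momentum (hL : Differentiable ℝ L)
    (hχs : Differentiable ℝ χ) {t : ℝ} {qs : Fin k → Evec n} {π : Evec n}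
    (hχ : pgrad L (Fin.last k) (t, Fin.snoc qs (χ (t, qs, π))) = π) :
    HasGradientAt (fun v => legendreFun L t qs v (χ (t, qs, v))) (χ (t, qs, π)) π := by
  refine hasGradientAt_envelope (F := fun x => legendreFun L t qs x.1 x.2) rfl
    (.legendreFun hL t (differentiableAt_const _) differentiableAt_fst differentiableAt_snd)
    ?_ (hasGradientAt_legendreFun_of_pgrad_eq hL hχ)
    (hχs.differentiableAt.comp π (by fun_prop))
  simp only [legendreFun, real_inner_comm (χ (t, qs, π))]
  simpa using (hasGradientAt_inner_right (χ (t, qs, π)) π).sub (hasGradientAt_const π _)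

theorem hasGradientAt_legendreFun_position (hL : Differentiable ℝ L)
    (hχs : Differentiable ℝ χ) {t : ℝ} {qs : Fin k → Evec n} {π : Evec n}
    (hχ : pgrad L (Fin.last k) (t, Fin.snoc qs (χ (t, qs, π))) = π) (J : Fin k) :
    HasGradientAt
      (fun v => legendreFun L t (Function.update qs J v) π (χ (t, Function.update qs J v, π)))
      (-pgrad L J.castSucc (t, Fin.snoc qs (χ (t, qs, π)))) (qs J) := by
  have hupd := (hasFDerivAt_update (𝕜 := ℝ) qs (i := J) (qs J)).differentiableAt
  refine hasGradientAt_envelope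
    (F := fun x => legendreFun L t (Function.update qs J x.1) π x.2) (w := χ (t, qs, π))
    (by simp) (.legendreFun hL t (by fun_prop)
      (differentiableAt_const _) differentiableAt_snd)
    ?_ (by simpa using hasGradientAt_legendreFun_of_pgrad_eq hL hχ)
    (hχs.differentiableAt.comp _ (by fun_prop))
  have h := hasGradientAt_pgrad hL (t, Fin.snoc qs (χ (t, qs, π))) J.castSucc
  simp only [Fin.snoc_castSucc] at h
  simp only [legendreFun, Fin.snoc_update]
  simpa using (hasGradientAt_const (qs J) _).sub h

end Legendre

section Hamiltonian

variable {n k : ℕ} {L : ℝ × (Fin (k + 1) → Evec n) → ℝ}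
  {χ : ℝ × (Fin k → Evec n) × Evec n → Evec n}

def hamiltonian (L : ℝ × (Fin (k + 1) → Evec n) → ℝ)
    (χ : ℝ × (Fin k → Evec n) × Evec n → Evec n) (hk : 0 < k) (t : ℝ)
    (qs ps : Fin k → Evec n) : ℝ :=
  ∑ i, ⟪ps i, nextOrZero qs i⟫ +
    legendreFun L t qs (ps ⟨k - 1, by omega⟩) (χ (t, qs, ps ⟨k - 1, by omega⟩))

theorem hasGradientAt_hamiltonian_momentum (hL : Differentiable ℝ L)
    (hχs : Differentiable ℝ χ) (hk : 0 < k) {t : ℝ} {qs : Fin k → Evec n}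
    (hχ : ∀ π, pgrad L (Fin.last k) (t, Fin.snoc qs (χ (t, qs, π))) = π)
    (ps : Fin k → Evec n) (I : Fin k) :
    HasGradientAt (fun v => hamiltonian L χ hk t qs (Function.update ps I v))
      ((Fin.snoc qs (χ (t, qs, ps ⟨k - 1, by omega⟩)) : Fin (k + 1) → Evec n) I.succ)
      (ps I) := by
  simp only [hamiltonian]
  set K : Fin k := ⟨k - 1, by omega⟩
  have hpair := hasGradientAt_sum_inner_update (nextOrZero qs) ps I (ps I)
  simp only [real_inner_comm _ (nextOrZero qs _)] at hpair
  by_cases hI : I = K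
  · subst hI
    have hlast : K.succ = Fin.last k := Fin.ext (by simp [K]; omega)
    have hnext : nextOrZero qs K = 0 := dif_neg (by simp [K]; omega)
    rw [hlast, Fin.snoc_last, ← zero_add (χ (t, qs, ps K)), ← hnext]
    simpa using hpair.add (hasGradientAt_legendreFun_momentum hL hχs (hχ (ps K)))
  · have hI' : (I : ℕ) + 1 < k := by
      have : (I : ℕ) ≠ k - 1 := fun h => hI (Fin.ext h)
      omega
    have hsucc : I.succ = Fin.castSucc ⟨I + 1, hI'⟩ := rfl
    have hnext : nextOrZero qs I = qs ⟨I + 1, hI'⟩ := dif_pos hI'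
    rw [hsucc, Fin.snoc_castSucc, ← add_zero (qs _), ← hnext]
    simpa [Function.update_of_ne (Ne.symm hI)] using hpair.add (hasGradientAt_const (ps I) _)

theorem hasGradientAt_hamiltonian_position (hL : Differentiable ℝ L)
    (hχs : Differentiable ℝ χ) (hk : 0 < k) {t : ℝ} {qs : Fin k → Evec n}
    (hχ : ∀ π, pgrad L (Fin.last k) (t, Fin.snoc qs (χ (t, qs, π))) = π)
    (ps : Fin k → Evec n) (J : Fin k) :
    HasGradientAt (fun v => hamiltonian L χ hk t (Function.update qs J v) ps)
      (prevOrZero ps J -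
        pgrad L J.castSucc (t, Fin.snoc qs (χ (t, qs, ps ⟨k - 1, by omega⟩)))) (qs J) := by
  simp only [hamiltonian, sum_inner_nextOrZero, sub_eq_add_neg]
  exact (hasGradientAt_sum_inner_update (prevOrZero ps) qs J (qs J)).add
    (hasGradientAt_legendreFun_position hL hχs (hχ _) J)

end Hamiltonian

/-- If `χ` is a smooth inverse of the highest Legendre relation
`∂L/∂q_k = π`, and `H = ∑_{i=0}^{k-2} ⟨p^i, q_{i+1}⟩ + ⟨p^{k-1}, χ⟩ − L(…, χ)` is the
associated Hamiltonian, then for curves `q_0, …, q_{k-1}, p^0, …, p^{k-1}` (with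
`q_k = χ(t, q_0, …, q_{k-1}, p^{k-1})`) the system consisting of the holonomy and momentum
equations is equivalent to the Hamilton equations for `H`. -/
theorem stmt5 (n k : ℕ) (hk : 1 ≤ k)
    (L : ℝ × (Fin (k+1) → Evec n) → ℝ) (hL : ContDiff ℝ ∞ L)
    (χ : ℝ × (Fin k → Evec n) × Evec n → Evec n) (hχs : ContDiff ℝ ∞ χ)
    (hχ : ∀ (t : ℝ) (qs : Fin k → Evec n) (π : Evec n),
      pgrad L (Fin.last k) (t, Fin.snoc qs (χ (t, qs, π))) = π)
    (H : ℝ × (Fin k → Evec n) × (Fin k → Evec n) → ℝ)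
    (hH : ∀ (t : ℝ) (qs ps : Fin k → Evec n),
      H (t, qs, ps) =
        (∑ i : Fin k, if h : (i : ℕ) + 1 < k then ⟪ps i, qs ⟨(i : ℕ)+1, h⟩⟫ else 0)
        + ⟪ps ⟨k-1, by omega⟩, χ (t, qs, ps ⟨k-1, by omega⟩)⟫
        - L (t, Fin.snoc qs (χ (t, qs, ps ⟨k-1, by omega⟩))))
    (q p : ℕ → ℝ → Evec n)
    (hqk : ∀ t, q k t = χ (t, fun i : Fin k => q (i : ℕ) t, p (k-1) t)) :
    -- system (A): holonomy and momentum equations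
    ((∀ i < k, ∀ t, deriv (q i) t = q (i+1) t) ∧
     (∀ t, deriv (p 0) t =
        pgrad L ⟨0, by omega⟩ (t, fun j : Fin (k+1) => q (j : ℕ) t)) ∧
     (∀ i, 1 ≤ i → ∀ hik : i ≤ k - 1, ∀ t,
        deriv (p i) t =
          pgrad L ⟨i, by omega⟩ (t, fun j : Fin (k+1) => q (j : ℕ) t) - p (i-1) t))
    ↔
    -- system (B): the Hamilton equations for H
    (∀ i, ∀ hik : i < k, ∀ t,
      deriv (q i) t =
        gradient (fun v => H (t, (fun j : Fin k => q (j : ℕ) t),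
          Function.update (fun j : Fin k => p (j : ℕ) t) ⟨i, hik⟩ v)) (p i t) ∧
      deriv (p i) t =
        - gradient (fun v => H (t, Function.update (fun j : Fin k => q (j : ℕ) t) ⟨i, hik⟩ v,
          (fun j : Fin k => p (j : ℕ) t))) (q i t)) := by
  have hL' : Differentiable ℝ L := hL.differentiable (by simp)
  have hχs' : Differentiable ℝ χ := hχs.differentiable (by simp)
  have hHam : H = fun x => hamiltonian L χ hk x.1 x.2.1 x.2.2 := by
    funext ⟨t, qs, ps⟩
    simp only [hH, hamiltonian, legendreFun, add_sub_assoc]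
    congr 1
    exact Finset.sum_congr rfl fun i _ => by unfold nextOrZero; split_ifs <;> simp
  have hsnoc : ∀ t, (Fin.snoc (fun j : Fin k => q j t)
      (χ (t, fun j : Fin k => q j t, p (k - 1) t)) : Fin (k + 1) → Evec n) =
      fun j : Fin (k + 1) => q j t := fun t => by
    rw [← hqk, Fin.snoc_val_eq (q · t)]
  have hdH_dp : ∀ i (hik : i < k) t, gradient (fun v => H (t, (fun j : Fin k => q j t),
      Function.update (fun j : Fin k => p j t) ⟨i, hik⟩ v)) (p i t) = q (i + 1) t :=
    fun i hik t => by
      rw [hHam, (hasGradientAt_hamiltonian_momentum hL' hχs' hk (hχ t _) _ _).gradient, hsnoc]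
      rfl
  have hdH_dq : ∀ i (hik : i < k) t, gradient (fun v => H (t, Function.update
      (fun j : Fin k => q j t) ⟨i, hik⟩ v, (fun j : Fin k => p j t))) (q i t) =
      prevOrZero (fun j : Fin k => p j t) ⟨i, hik⟩ - pgrad L ⟨i, by omega⟩ (t, fun j => q j t) :=
    fun i hik t => by
      rw [hHam, (hasGradientAt_hamiltonian_position hL' hχs' hk (hχ t _) _ _).gradient, hsnoc]
      rfl
  constructor
  · rintro ⟨hhol, hmom₀, hmom⟩ i hik t
    refine ⟨(hhol i hik t).trans (hdH_dp i hik t).symm, ?_⟩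
    rw [hdH_dq]
    rcases Nat.eq_zero_or_pos i with rfl | hi
    · simp [prevOrZero, hmom₀]
    · simp [prevOrZero, hmom i hi (by omega), Nat.one_le_iff_ne_zero.2 hi.ne']
  · intro hB
    refine ⟨fun i hik t => (hB i hik t).1.trans (hdH_dp i hik t), fun t => ?_,
      fun i hi hik t => ?_⟩
    · simpa [hdH_dq, prevOrZero] using (hB 0 hk t).2
    · have h := (hB i (by omega) t).2
      rw [hdH_dq] at h
      simpa [prevOrZero, hi] using h
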